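/- arXiv:2206.08520 — 3 statements merged into one kernel-verified Lean document; each statement's English description precedes it below -/
import Mathlib

section
/- Let V_t ∈ ℝ^{(n+d)×(n+d)} be symmetric positive definite, β_t > 0, and H* ∈ ℝ^{(n+d)×n} have full column rank. Define F_t = β_t² H*ᵀ V_t⁻¹ H*. Then for any Θ̂, Θ* ∈ ℝ^{(n+d)×n}: if tr((Θ̂ - Θ*)ᵀ β_t⁻² V_t (Θ̂ - Θ*)) ≤ 1 then tr((H*ᵀΘ̂ - H*ᵀΘ*)ᵀ F_t⁻¹ (H*ᵀΘ̂ - H*ᵀΘ*)) ≤ 1. Equivalently, the RLS confidence ellipsoid is contained in the closed-loop confidence ellipsoid. -/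
/-!
With `Δ = Θ̂ - Θ*` and `G = Hᵀ V⁻¹ H` (positive definite because `H` is injective), `G` is the
Schur complement of `V` in the block matrix `[V H; Hᵀ G]`, which is therefore positive
semidefinite; hence so is the other Schur complement `V - H G⁻¹ Hᵀ`. Conjugating by `Δ` and
taking traces gives `tr((HᵀΔ)ᵀ G⁻¹ (HᵀΔ)) ≤ tr(Δᵀ V Δ)`, and both sides of the claim are these
traces divided by `β²`.
-/

open Matrix

namespace Matrix

variable {m k : Type*} [Fintype k]

theorem mulVec_injective_of_rank_eq_card {K : Type*} [Field K] {H : Matrix m k K}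
    (hH : H.rank = Fintype.card k) : Function.Injective H.mulVec := by
  rw [← coe_mulVecLin, ← LinearMap.ker_eq_bot, ← Submodule.finrank_eq_zero]
  have := LinearMap.finrank_range_add_finrank_ker H.mulVecLin
  rw [← rank, hH, Module.finrank_fintype_fun_eq_card] at this
  omega

theorem inv_smul_of_isUnit_det [DecidableEq k] {K : Type*} [Field K] (c : K)
    {A : Matrix k k K} (hA : IsUnit A.det) : (c • A)⁻¹ = c⁻¹ • A⁻¹ := by
  rcases eq_or_ne c 0 with rfl | hc
  · simp
  · exact inv_smul' A (Units.mk0 c hc) hA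

variable [Fintype m]

theorem trace_conjTranspose_mul_mul_le_of_posSemidef_sub {R : Type*} [CommRing R]
    [PartialOrder R] [StarRing R] [IsOrderedAddMonoid R] {A B : Matrix m m R}
    (hAB : (B - A).PosSemidef) (Δ : Matrix m k R) :
    (Δᴴ * A * Δ).trace ≤ (Δᴴ * B * Δ).trace := by
  have := (hAB.conjTranspose_mul_mul_same Δ).trace_nonneg
  rwa [Matrix.mul_sub, Matrix.sub_mul, trace_sub, sub_nonneg] at this

variable [DecidableEq m] [DecidableEq k] {K : Type*} [Field K] [PartialOrder K] [StarRing K]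
  [StarOrderedRing K]

theorem PosDef.posSemidef_sub_mul_inv_conjTranspose_mul_inv_mul_mul_conjTranspose
    {V : Matrix m m K} (hV : V.PosDef) {H : Matrix m k K} (hH : Function.Injective H.mulVec) :
    (V - H * (Hᴴ * V⁻¹ * H)⁻¹ * Hᴴ).PosSemidef := by
  have hG : (Hᴴ * V⁻¹ * H).PosDef := hV.inv.conjTranspose_mul_mul_same hH
  let _ := hV.isUnit.invertible
  let _ := hG.isUnit.invertible
  rw [← PosDef.fromBlocks₂₂ V H hG, PosDef.fromBlocks₁₁ H _ hV, sub_self]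
  exact PosSemidef.zero

end Matrix

theorem rls_subset_closedLoop_general {n d : ℕ}
    (V : Matrix (Fin (n + d)) (Fin (n + d)) ℝ) (hV : V.PosDef)
    (β : ℝ)
    (H : Matrix (Fin (n + d)) (Fin n) ℝ) (hH : H.rank = n)
    (Θhat Θstar : Matrix (Fin (n + d)) (Fin n) ℝ)
    (hRLS : ((Θhat - Θstar)ᵀ * ((β ^ 2)⁻¹ • V) * (Θhat - Θstar)).trace ≤ 1) :
    ((Hᵀ * Θhat - Hᵀ * Θstar)ᵀ * (β ^ 2 • (Hᵀ * V⁻¹ * H))⁻¹ *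
        (Hᵀ * Θhat - Hᵀ * Θstar)).trace ≤ 1 := by
  have hinj : Function.Injective H.mulVec :=
    mulVec_injective_of_rank_eq_card (by rwa [Fintype.card_fin])
  have hdet : IsUnit (Hᵀ * V⁻¹ * H).det :=
    (isUnit_iff_isUnit_det _).mp (hV.inv.conjTranspose_mul_mul_same hinj).isUnit
  have hle := trace_conjTranspose_mul_mul_le_of_posSemidef_sub
    (hV.posSemidef_sub_mul_inv_conjTranspose_mul_inv_mul_mul_conjTranspose hinj) (Θhat - Θstar)
  simp only [conjTranspose_eq_transpose_of_trivial] at hle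
  calc _ = (β ^ 2)⁻¹ *
        ((Θhat - Θstar)ᵀ * (H * (Hᵀ * V⁻¹ * H)⁻¹ * Hᵀ) * (Θhat - Θstar)).trace := by
        rw [← Matrix.mul_sub, inv_smul_of_isUnit_det _ hdet]
        simp only [transpose_mul, transpose_transpose, Matrix.mul_smul, Matrix.smul_mul,
          trace_smul, smul_eq_mul, Matrix.mul_assoc]
    _ ≤ (β ^ 2)⁻¹ * ((Θhat - Θstar)ᵀ * V * (Θhat - Θstar)).trace := by gcongr
    _ = _ := by simp only [Matrix.mul_smul, Matrix.smul_mul, trace_smul, smul_eq_mul]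
    _ ≤ 1 := hRLS

/-- the RLS confidence ellipsoid is contained in the closed-loop confidence
ellipsoid.  With `F = β² Hᵀ V⁻¹ H`, if `tr((Θ̂-Θ*)ᵀ β⁻² V (Θ̂-Θ*)) ≤ 1` then
`tr((HᵀΘ̂ - HᵀΘ*)ᵀ F⁻¹ (HᵀΘ̂ - HᵀΘ*)) ≤ 1`. -/
theorem rls_subset_closedLoop {n d : ℕ}
    (V : Matrix (Fin (n + d)) (Fin (n + d)) ℝ) (hV : V.PosDef)
    (β : ℝ) (hβ : 0 < β)
    (H : Matrix (Fin (n + d)) (Fin n) ℝ) (hH : H.rank = n)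
    (Θhat Θstar : Matrix (Fin (n + d)) (Fin n) ℝ)
    (hRLS : ((Θhat - Θstar)ᵀ * ((β ^ 2)⁻¹ • V) * (Θhat - Θstar)).trace ≤ 1) :
    ((Hᵀ * Θhat - Hᵀ * Θstar)ᵀ * (β ^ 2 • (Hᵀ * V⁻¹ * H))⁻¹ *
        (Hᵀ * Θhat - Hᵀ * Θstar)).trace ≤ 1 :=
  rls_subset_closedLoop_general V hV β H hH Θhat Θstar hRLS
end

section
/- Let ξ be a standard normal random variable, X an independent chi-squared random variable with k ≥ 1 degrees of freedom, and f_k its density. For a > 0 define p_k(a) = ∫₀^{a²} [Q(1 + a − √(a² − x)) − Q(1 + a + √(a² − x))] f_k(x) dx, where Q is the Gaussian tail function Q(z) = P(ξ > z). Then a ↦ p_k(a) is monotonically nondecreasing on (0, ∞). -/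
open Real MeasureTheory

/-- The Gaussian tail function `Q(z) = ∫_z^∞ (2π)^{-1/2} e^{-u²/2} du`. -/
noncomputable def gaussQ (z : ℝ) : ℝ :=
  ∫ u in Set.Ioi z, Real.exp (-u ^ 2 / 2) / Real.sqrt (2 * Real.pi)

/-- The chi-squared density with `k` degrees of freedom. -/
noncomputable def chiSqPDF (k : ℕ) (x : ℝ) : ℝ :=
  x ^ ((k : ℝ) / 2 - 1) * Real.exp (-x / 2) / (2 ^ ((k : ℝ) / 2) * Real.Gamma ((k : ℝ) / 2))

/-- `p_k(a) = ∫₀^{a²} [Q(1 + a − √(a² − x)) − Q(1 + a + √(a² − x))] f_k(x) dx`. -/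
noncomputable def pOpt (k : ℕ) (a : ℝ) : ℝ :=
  ∫ x in (0 : ℝ)..(a ^ 2),
    (gaussQ (1 + a - Real.sqrt (a ^ 2 - x)) - gaussQ (1 + a + Real.sqrt (a ^ 2 - x))) *
      chiSqPDF k x

lemma gauss_integrableOn (z : ℝ) :
    IntegrableOn (fun u => Real.exp (-u ^ 2 / 2) / Real.sqrt (2 * Real.pi))
      (Set.Ioi z) := by
  have h : Integrable (fun u : ℝ => Real.exp (-(1/2 : ℝ) * u ^ 2)) :=
    integrable_exp_neg_mul_sq (by norm_num)
  have h2 : Integrable (fun u : ℝ => Real.exp (-u ^ 2 / 2) / Real.sqrt (2 * Real.pi)) := by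
    have := h.div_const (Real.sqrt (2 * Real.pi))
    convert this using 2 with u
    ring_nf
  exact h2.integrableOn

lemma gaussQ_nonneg (z : ℝ) : 0 ≤ gaussQ z := by
  apply setIntegral_nonneg measurableSet_Ioi
  intro u _
  positivity

lemma gaussQ_anti : Antitone gaussQ := by
  intro z w h
  exact setIntegral_mono_set (gauss_integrableOn z)
    (Filter.Eventually.of_forall fun u => by positivity)
    ((Set.Ioi_subset_Ioi h).eventuallyLE)

lemma sqrt_sq_sub_le {a x : ℝ} (ha : 0 ≤ a) (hx : 0 ≤ x) :
    Real.sqrt (a ^ 2 - x) ≤ a := by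
  calc Real.sqrt (a ^ 2 - x) ≤ Real.sqrt (a ^ 2) := Real.sqrt_le_sqrt (by linarith)
  _ = a := by rw [Real.sqrt_sq ha]

lemma chiSqPDF_nonneg (k : ℕ) (hk : 1 ≤ k) {x : ℝ} (hx : 0 ≤ x) :
    0 ≤ chiSqPDF k x := by
  unfold chiSqPDF
  have hG : 0 < Real.Gamma ((k : ℝ) / 2) := by
    apply Real.Gamma_pos_of_pos
    have : (1 : ℝ) ≤ (k : ℝ) := by exact_mod_cast hk
    linarith
  have h2 : (0 : ℝ) < (2 : ℝ) ^ ((k : ℝ) / 2) := Real.rpow_pos_of_pos (by norm_num) _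
  have := Real.rpow_nonneg hx ((k : ℝ) / 2 - 1)
  positivity

lemma chiSqPDF_intervalIntegrable (k : ℕ) (hk : 1 ≤ k) (d : ℝ) :
    IntervalIntegrable (chiSqPDF k) volume 0 d := by
  have hr : (-1 : ℝ) < (k : ℝ) / 2 - 1 := by
    have : (1 : ℝ) ≤ (k : ℝ) := by exact_mod_cast hk
    linarith
  have h1 : IntervalIntegrable (fun x : ℝ => x ^ ((k : ℝ) / 2 - 1)) volume 0 d :=
    intervalIntegral.intervalIntegrable_rpow' hr
  have h2 := h1.mul_continuousOn (g := fun x =>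
      Real.exp (-x / 2) / (2 ^ ((k : ℝ) / 2) * Real.Gamma ((k : ℝ) / 2)))
    (by fun_prop)
  convert h2 using 2 with x
  unfold chiSqPDF
  ring

lemma chiSqPDF_measurable (k : ℕ) : Measurable (chiSqPDF k) := by
  unfold chiSqPDF
  fun_prop

/-- Measurability of the integrand. -/
lemma integrand_measurable (k : ℕ) (c : ℝ) :
    Measurable (fun x =>
      (gaussQ (1 + c - Real.sqrt (c ^ 2 - x)) - gaussQ (1 + c + Real.sqrt (c ^ 2 - x))) *
        chiSqPDF k x) := by
  have hg : Measurable gaussQ := gaussQ_anti.measurable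
  have h1 : Measurable fun x : ℝ => 1 + c - Real.sqrt (c ^ 2 - x) := by fun_prop
  have h2 : Measurable fun x : ℝ => 1 + c + Real.sqrt (c ^ 2 - x) := by fun_prop
  exact ((hg.comp h1).sub (hg.comp h2)).mul (chiSqPDF_measurable k)

/-- Nonnegativity of the gaussQ difference. -/
lemma qdiff_nonneg (c x : ℝ) :
    0 ≤ gaussQ (1 + c - Real.sqrt (c ^ 2 - x)) - gaussQ (1 + c + Real.sqrt (c ^ 2 - x)) := by
  have := Real.sqrt_nonneg (c ^ 2 - x)
  have := gaussQ_anti (show 1 + c - Real.sqrt (c ^ 2 - x) ≤ 1 + c + Real.sqrt (c ^ 2 - x) by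
    linarith)
  linarith

/-- Bound: the gaussQ difference is at most `gaussQ 1` for `x ≥ 0`, `c ≥ 0`. -/
lemma qdiff_le (c : ℝ) (hc : 0 ≤ c) {x : ℝ} (hx : 0 ≤ x) :
    gaussQ (1 + c - Real.sqrt (c ^ 2 - x)) - gaussQ (1 + c + Real.sqrt (c ^ 2 - x))
      ≤ gaussQ 1 := by
  have h1 : Real.sqrt (c ^ 2 - x) ≤ c := sqrt_sq_sub_le hc hx
  have h2 : gaussQ (1 + c - Real.sqrt (c ^ 2 - x)) ≤ gaussQ 1 :=
    gaussQ_anti (by linarith)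
  have h3 := gaussQ_nonneg (1 + c + Real.sqrt (c ^ 2 - x))
  linarith

/-- Integrability of the integrand on `[0, d]`. -/
lemma integrand_intervalIntegrable (k : ℕ) (hk : 1 ≤ k) {c : ℝ} (hc : 0 ≤ c)
    {d : ℝ} (hd : 0 ≤ d) :
    IntervalIntegrable (fun x =>
      (gaussQ (1 + c - Real.sqrt (c ^ 2 - x)) - gaussQ (1 + c + Real.sqrt (c ^ 2 - x))) *
        chiSqPDF k x) volume 0 d := by
  rw [intervalIntegrable_iff_integrableOn_Ioc_of_le hd]
  have hchi : IntegrableOn (chiSqPDF k) (Set.Ioc 0 d) := by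
    have := chiSqPDF_intervalIntegrable k hk d
    rwa [intervalIntegrable_iff_integrableOn_Ioc_of_le hd] at this
  apply Integrable.mono' (g := fun x => gaussQ 1 * chiSqPDF k x) (hchi.const_mul _)
    ((integrand_measurable k c).aestronglyMeasurable.restrict)
  filter_upwards [ae_restrict_mem measurableSet_Ioc] with x hx
  have hx0 : (0 : ℝ) ≤ x := hx.1.le
  rw [Real.norm_eq_abs, abs_of_nonneg (mul_nonneg (qdiff_nonneg c x) (chiSqPDF_nonneg k hk hx0))]
  exact mul_le_mul_of_nonneg_right (qdiff_le c hc hx0) (chiSqPDF_nonneg k hk hx0)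

/-- The key inequality: `b - √(b²-x) ≤ a - √(a²-x)` for `0 < a ≤ b`, `0 ≤ x ≤ a²`. -/
lemma key_ineq {a b x : ℝ} (ha : 0 < a) (hab : a ≤ b) (hx0 : 0 ≤ x) (hxa : x ≤ a ^ 2) :
    b - Real.sqrt (b ^ 2 - x) ≤ a - Real.sqrt (a ^ 2 - x) := by
  set s := Real.sqrt (a ^ 2 - x) with hs
  set t := Real.sqrt (b ^ 2 - x) with ht
  have hs0 : 0 ≤ s := Real.sqrt_nonneg _
  have ht0 : 0 ≤ t := Real.sqrt_nonneg _
  have hsa : s ≤ a := sqrt_sq_sub_le ha.le hx0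
  have htb : t ≤ b := sqrt_sq_sub_le (ha.le.trans hab) hx0
  have hs2 : s ^ 2 = a ^ 2 - x := Real.sq_sqrt (by linarith)
  have ht2 : t ^ 2 = b ^ 2 - x := Real.sq_sqrt (by nlinarith)
  have hst : s ≤ t := by nlinarith
  nlinarith [mul_pos ha (ha.trans_le hab)]

lemma qdiff_mono {a b x : ℝ} (ha : 0 < a) (hab : a ≤ b) (hx0 : 0 ≤ x) (hxa : x ≤ a ^ 2) :
    gaussQ (1 + a - Real.sqrt (a ^ 2 - x)) - gaussQ (1 + a + Real.sqrt (a ^ 2 - x)) ≤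
    gaussQ (1 + b - Real.sqrt (b ^ 2 - x)) - gaussQ (1 + b + Real.sqrt (b ^ 2 - x)) := by
  have h1 : 1 + b - Real.sqrt (b ^ 2 - x) ≤ 1 + a - Real.sqrt (a ^ 2 - x) := by
    have := key_ineq ha hab hx0 hxa
    linarith
  have h2 : 1 + a + Real.sqrt (a ^ 2 - x) ≤ 1 + b + Real.sqrt (b ^ 2 - x) := by
    have := Real.sqrt_le_sqrt (show a ^ 2 - x ≤ b ^ 2 - x by nlinarith)
    linarith
  have := gaussQ_anti h1
  have := gaussQ_anti h2
  linarith

/-- `a ↦ p_k(a)` is monotonically nondecreasing on `(0, ∞)`. -/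
theorem pOpt_monotoneOn (k : ℕ) (hk : 1 ≤ k) :
    MonotoneOn (pOpt k) (Set.Ioi (0 : ℝ)) := by
  intro a ha b hb hab
  simp only [Set.mem_Ioi] at ha hb
  have ha2 : (0 : ℝ) ≤ a ^ 2 := sq_nonneg a
  have hb2 : (0 : ℝ) ≤ b ^ 2 := sq_nonneg b
  have hab2 : a ^ 2 ≤ b ^ 2 := by nlinarith
  unfold pOpt
  calc (∫ x in (0:ℝ)..(a ^ 2),
        (gaussQ (1 + a - Real.sqrt (a ^ 2 - x)) - gaussQ (1 + a + Real.sqrt (a ^ 2 - x))) *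
          chiSqPDF k x)
      ≤ ∫ x in (0:ℝ)..(a ^ 2),
        (gaussQ (1 + b - Real.sqrt (b ^ 2 - x)) - gaussQ (1 + b + Real.sqrt (b ^ 2 - x))) *
          chiSqPDF k x := by
        apply intervalIntegral.integral_mono_on ha2
          (integrand_intervalIntegrable k hk ha.le ha2)
          (integrand_intervalIntegrable k hk hb.le ha2)
        intro x hx
        exact mul_le_mul_of_nonneg_right (qdiff_mono ha hab hx.1 hx.2)
          (chiSqPDF_nonneg k hk hx.1)
    _ ≤ ∫ x in (0:ℝ)..(b ^ 2),
        (gaussQ (1 + b - Real.sqrt (b ^ 2 - x)) - gaussQ (1 + b + Real.sqrt (b ^ 2 - x))) *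
          chiSqPDF k x := by
        apply intervalIntegral.integral_mono_interval le_rfl ha2 hab2
        · filter_upwards [ae_restrict_mem measurableSet_Ioc] with x hx
          exact mul_nonneg (qdiff_nonneg b x) (chiSqPDF_nonneg k hk hx.1.le)
        · exact integrand_intervalIntegrable k hk hb.le hb2
end

section
/- Let V ⪰ W ≻ 0 be symmetric positive definite m×m matrices and Θ ∈ ℝ^{m×n}. Then ‖V^{1/2}Θ‖²_F ≤ (det(V)/det(W)) · ‖W^{1/2}Θ‖²_F. -/
/-!
In the Loewner order, conjugating by `W^{-1/2}` turns `W ≤ V` into `1 ≤ S` with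
`S = W^{-1/2} V W^{-1/2}` and `det S = det V / det W`. All eigenvalues of `S` are then at least `1`,
so each is bounded by their product `det S`, i.e. `S ≤ det S • 1`. Conjugating back gives
`V ≤ (det V / det W) • W`, which congruence by `Θ` and the trace preserve.
-/

open Matrix
open scoped MatrixOrder ComplexOrder

namespace Matrix

variable {m n : Type*} [Fintype m]

lemma le_det_smul_one_of_one_le [DecidableEq m] {S : Matrix m m ℝ} (h : 1 ≤ S) :
    S ≤ S.det • (1 : Matrix m m ℝ) := by
  have hS : S.IsHermitian := by
    simpa using (le_iff.1 h).isHermitian.add isHermitian_one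
  have one_le_eig (i : m) : 1 ≤ hS.eigenvalues i := by
    rw [← map_one (algebraMap ℝ (Matrix m m ℝ)),
      algebraMap_le_iff_le_spectrum hS.isSelfAdjoint] at h
    exact h _ (hS.eigenvalues_mem_spectrum_real i)
  rw [← Algebra.algebraMap_eq_smul_one, le_algebraMap_iff_spectrum_le hS.isSelfAdjoint,
    hS.spectrum_real_eq_range_eigenvalues]
  rintro _ ⟨i, rfl⟩
  calc hS.eigenvalues i = ∏ j ∈ {i}, hS.eigenvalues j := by simp
    _ ≤ ∏ j, hS.eigenvalues j :=
      Finset.prod_le_prod_of_subset_of_one_le (by simp)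
        (fun j _ ↦ zero_le_one.trans (one_le_eig j)) (fun j _ _ ↦ one_le_eig j)
    _ = S.det := by simp [hS.det_eq_prod_eigenvalues]

lemma PosDef.le_det_div_det_smul_of_le [DecidableEq m] {V W : Matrix m m ℝ} (hW : W.PosDef)
    (h : W ≤ V) :
    V ≤ (V.det / W.det) • W := by
  set R := CFC.sqrt W
  have hR : R.PosDef := (IsStrictlyPositive.sqrt W hW.isStrictlyPositive).posDef
  have hRR : R * R = W := CFC.sqrt_mul_sqrt_self W hW.posSemidef.nonneg
  have hdetR : IsUnit R.det := isUnit_iff_ne_zero.2 hR.det_pos.ne'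
  have hRinv : star R⁻¹ = R⁻¹ := hR.inv.isHermitian
  set S := R⁻¹ * V * R⁻¹
  have hS : 1 ≤ S := by
    have : R⁻¹ * W * R⁻¹ = 1 := by
      rw [← hRR, ← Matrix.mul_assoc, mul_nonsing_inv_cancel_right _ _ hdetR,
        nonsing_inv_mul _ hdetR]
    simpa [this, hRinv] using star_left_conjugate_le_conjugate h R⁻¹
  have hdetS : S.det = V.det / W.det := by
    rw [← hRR, det_mul, det_mul, det_mul, det_nonsing_inv, Ring.inverse_eq_inv]
    field_simp [hdetR.ne_zero]
  calc V = star R * S * R := by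
        simp only [S, hR.isHermitian.star_eq, ← Matrix.mul_assoc, mul_nonsing_inv _ hdetR,
          Matrix.one_mul]
        rw [Matrix.mul_assoc, nonsing_inv_mul _ hdetR, Matrix.mul_one]
    _ ≤ star R * (S.det • 1) * R :=
      star_left_conjugate_le_conjugate (le_det_smul_one_of_one_le hS) R
    _ = (V.det / W.det) • W := by simp [hdetS, hR.isHermitian.star_eq, hRR]

variable {𝕜 : Type*} [RCLike 𝕜]

lemma trace_conjTranspose_mul_mul_mono [Fintype n] {A B : Matrix m m 𝕜} (h : A ≤ B)
    (Θ : Matrix m n 𝕜) :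
    (Θᴴ * A * Θ).trace ≤ (Θᴴ * B * Θ).trace := by
  have hdiff := ((le_iff.1 h).conjTranspose_mul_mul_same Θ).trace_nonneg
  rwa [Matrix.mul_sub, Matrix.sub_mul, trace_sub, sub_nonneg] at hdiff

end Matrix

/-- if `V ⪰ W ≻ 0` then
`‖V^{1/2}Θ‖²_F = tr(Θᵀ V Θ) ≤ (det V / det W) tr(Θᵀ W Θ) = (det V / det W) ‖W^{1/2}Θ‖²_F`. -/
theorem weighted_frobenius_det_bound {m n : ℕ}
    (V W : Matrix (Fin m) (Fin m) ℝ) (hW : W.PosDef) (hVW : (V - W).PosSemidef)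
    (Θ : Matrix (Fin m) (Fin n) ℝ) :
    (Θᵀ * V * Θ).trace ≤ (V.det / W.det) * (Θᵀ * W * Θ).trace := by
  have hV_le : V ≤ (V.det / W.det) • W := hW.le_det_div_det_smul_of_le (le_iff.2 hVW)
  have htrace := trace_conjTranspose_mul_mul_mono hV_le Θ
  rwa [conjTranspose_eq_transpose_of_trivial, Matrix.mul_smul, Matrix.smul_mul, trace_smul,
    smul_eq_mul] at htrace
end
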